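/- arXiv:1210.7734 — 4 statements merged into one kernel-verified Lean document; each statement's English description precedes it below -/
import Mathlib

section
/- For nonnegative integers j, k and integer n ≥ 1, ∫_0^∞ x^{n-1} e^{-2x} L_j^{(n-1)}(x) L_k^{(n-1)}(x) dx = Γ(j+k+n) / (j! · k! · 2^{j+k+n}). -/
/-!
For `α = a ∈ ℕ` we have `L_j^{(a)}(x) = ∑ᵢ (-1)ⁱ C(a+j, a+i) xⁱ / i!`, and
`∫₀^∞ xᵐ e^{-2x} dx = m! / 2^{m+1}`, so the integral is a finite double sum of the trinomial
coefficients `T(a,i,l) = (a+i+l)! / (a! i! l!)`. Writing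
`T(a,i,l) = ∑ₘ C(a+i, a+m) C(a+l, a+m) C(a+m, m)` separates `i` from `l`, and the transform
`f ↦ ∑ᵢ (-1)ⁱ C(a+j, a+i) 2^{j-i} f(i)` sends `i ↦ C(a+i, a+m)` to `(-1)ᵐ C(a+j, a+m)`
(the binomial theorem for `(2 - 1)^{j-m}`). Applied in both variables, the double sum
collapses back to `T(a,j,k) = (a+j+k)! / (a! j! k!)`.
-/

open scoped BigOperators
open MeasureTheory Real

noncomputable def genBinom (a : ℝ) (k : ℕ) : ℝ :=
  (∏ i ∈ Finset.range k, (a - i)) / (Nat.factorial k)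

noncomputable def lag (j : ℕ) (α : ℝ) (x : ℝ) : ℝ :=
  ∑ i ∈ Finset.range (j + 1),
    (-1 : ℝ) ^ i * genBinom ((j : ℝ) + α) (j - i) * x ^ i / (Nat.factorial i)

open Finset Set Nat

theorem sum_range_choose_mul_choose_add (l y c N : ℕ) (h : y < c + N) :
    ∑ m ∈ range N, l.choose m * y.choose (c + m) = (l + y).choose (l + c) := by
  induction l generalizing c N with
  | zero =>
    cases N with
    | zero => simp [Nat.choose_eq_zero_of_lt (show y < c by omega)]
    | succ N => simp [sum_range_succ']
  | succ l ih =>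
    cases N with
    | zero => simp [Nat.choose_eq_zero_of_lt (show l + 1 + y < l + 1 + c by omega)]
    | succ N =>
      have h₁ := ih c (N + 1) h
      have h₂ := ih (c + 1) N (by omega)
      rw [sum_range_succ'] at h₁ ⊢
      simp only [add_right_comm c 1, add_assoc] at h₂
      rw [show l + 1 + y = l + y + 1 by ring, show l + 1 + c = l + c + 1 by ring,
        Nat.choose_succ_succ', add_assoc l c 1, ← h₁, ← h₂]
      simp only [Nat.choose_succ_succ', add_mul, sum_add_distrib, Nat.choose_zero_right]
      ring

theorem choose_mul_choose_eq_choose_add_mul (a l m : ℕ) :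
    (a + l).choose l * l.choose m = (a + l).choose (a + m) * (a + m).choose m := by
  rcases le_or_gt m l with hml | hml
  · rw [Nat.choose_mul hml, Nat.choose_mul (show m ≤ a + m by omega), Nat.add_sub_cancel,
      Nat.choose_symm_of_eq_add (show a + l - m = (l - m) + a by omega)]
  · simp [Nat.choose_eq_zero_of_lt hml, Nat.choose_eq_zero_of_lt (show a + l < a + m by omega)]

theorem sum_neg_one_pow_mul_choose_mul_choose_mul_two_pow (c n q : ℕ) :
    ∑ i ∈ range (n + 1),
        (-1 : ℤ) ^ i * (c + n).choose (c + i) * (c + i).choose (c + q) * 2 ^ (n - i)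
      = (-1) ^ q * (c + n).choose (c + q) := by
  have below : ∀ i < q, (c + i).choose (c + q) = 0 :=
    fun i hi => Nat.choose_eq_zero_of_lt (by omega)
  rcases lt_or_ge n q with hnq | hqn
  · rw [Nat.choose_eq_zero_of_lt (show c + n < c + q by omega), Nat.cast_zero, mul_zero]
    exact sum_eq_zero fun i hi => by simp [below i (by simp at hi; omega)]
  obtain ⟨r, rfl⟩ := Nat.exists_eq_add_of_le hqn
  rw [show q + r + 1 = q + (r + 1) by ring, sum_range_add,
    sum_eq_zero fun i hi => by simp [below i (by simpa using hi)], zero_add]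
  have revision : ∀ t ∈ range (r + 1), (-1 : ℤ) ^ (q + t) * (c + (q + r)).choose (c + (q + t))
      * (c + (q + t)).choose (c + q) * 2 ^ (q + r - (q + t))
      = (-1) ^ q * (c + (q + r)).choose (c + q) * ((-1) ^ t * 2 ^ (r - t) * r.choose t) := by
    intro t _
    have h := Nat.choose_mul (n := c + (q + r)) (k := c + (q + t)) (s := c + q) (by omega)
    rw [show c + (q + r) - (c + q) = r by omega, show c + (q + t) - (c + q) = t by omega] at h
    have h' : ((c + (q + r)).choose (c + (q + t)) : ℤ) * (c + (q + t)).choose (c + q)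
        = (c + (q + r)).choose (c + q) * r.choose t := by exact_mod_cast h
    rw [show q + r - (q + t) = r - t by omega, pow_add]
    linear_combination ((-1) ^ q * (-1) ^ t * 2 ^ (r - t) : ℤ) * h'
  rw [sum_congr rfl revision, ← mul_sum, ← add_pow]
  norm_num

def trinomial (a i l : ℕ) : ℕ := (a + l).choose l * (a + l + i).choose i

theorem trinomial_mul_factorial (a i l : ℕ) :
    trinomial a i l * (a ! * i ! * l !) = (a + i + l)! := by
  rw [trinomial, add_right_comm a i l, ← Nat.add_choose_mul_factorial_mul_factorial (a + l) i,
    ← Nat.add_choose_mul_factorial_mul_factorial a l]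
  ring

theorem trinomial_eq_sum (a i l N : ℕ) (hi : i < N) :
    trinomial a i l
      = ∑ m ∈ range N, (a + i).choose (a + m) * (a + l).choose (a + m) * (a + m).choose m := by
  rw [trinomial, Nat.choose_symm_of_eq_add (show a + l + i = i + (l + a) by ring),
    show a + l + i = l + (a + i) by ring,
    ← sum_range_choose_mul_choose_add l (a + i) a N (by omega), mul_sum]
  refine sum_congr rfl fun m _ => ?_
  rw [← mul_assoc, choose_mul_choose_eq_choose_add_mul]
  ring

theorem sum_sum_neg_one_pow_mul_trinomial (a j k : ℕ) :
    ∑ i ∈ range (j + 1), ∑ l ∈ range (k + 1),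
      (-1 : ℤ) ^ i * (a + j).choose (a + i) * 2 ^ (j - i)
        * ((-1) ^ l * (a + k).choose (a + l) * 2 ^ (k - l)) * trinomial a i l
      = trinomial a j k := by
  have expand : ∀ i ∈ range (j + 1), ∀ l, (trinomial a i l : ℤ) = ∑ m ∈ range (j + 1),
      ((a + i).choose (a + m) * (a + l).choose (a + m) * (a + m).choose m : ℤ) :=
    fun i hi l => by rw [trinomial_eq_sum a i l (j + 1) (by simpa using hi)]; push_cast; rfl
  calc _ = ∑ m ∈ range (j + 1), (a + m).choose m *
        ((∑ i ∈ range (j + 1),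
          (-1 : ℤ) ^ i * (a + j).choose (a + i) * (a + i).choose (a + m) * 2 ^ (j - i))
        * ∑ l ∈ range (k + 1),
          (-1 : ℤ) ^ l * (a + k).choose (a + l) * (a + l).choose (a + m) * 2 ^ (k - l)) := by
        simp_rw [sum_mul_sum, mul_sum]
        rw [sum_congr rfl fun i hi => sum_congr rfl fun l _ => by rw [expand i hi l, mul_sum]]
        conv_lhs => enter [2, i]; rw [sum_comm]
        rw [sum_comm]
        refine sum_congr rfl fun m _ => sum_congr rfl fun i _ => sum_congr rfl fun l _ => ?_
        ring
    _ = ∑ m ∈ range (j + 1),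
          ((a + j).choose (a + m) * (a + k).choose (a + m) * (a + m).choose m : ℤ) := by
        refine sum_congr rfl fun m _ => ?_
        have hsq : ((-1 : ℤ) ^ m) * (-1) ^ m = 1 := by rw [← mul_pow]; norm_num
        rw [sum_neg_one_pow_mul_choose_mul_choose_mul_two_pow,
          sum_neg_one_pow_mul_choose_mul_choose_mul_two_pow]
        linear_combination ((a + m).choose m * (a + j).choose (a + m) * (a + k).choose (a + m)
          : ℤ) * hsq
    _ = trinomial a j k := by rw [trinomial_eq_sum a j k (j + 1) (by omega)]; push_cast; rfl

theorem integral_pow_mul_exp_neg_mul_Ioi (m : ℕ) {b : ℝ} (hb : 0 < b) :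
    ∫ x in Ioi (0 : ℝ), x ^ m * exp (-b * x) = m ! / b ^ (m + 1) := by
  have h := integral_rpow_mul_exp_neg_mul_Ioi (a := m + 1) (by positivity) hb
  rw [add_sub_cancel_right, Gamma_nat_eq_factorial, ← Nat.cast_add_one, rpow_natCast] at h
  simp_rw [rpow_natCast, ← neg_mul] at h
  rw [h, one_div_pow]
  ring

theorem integrableOn_pow_mul_exp_neg_mul_Ioi (m : ℕ) {b : ℝ} (hb : 0 < b) :
    IntegrableOn (fun x : ℝ => x ^ m * exp (-b * x)) (Ioi 0) :=
  .of_integral_ne_zero (by rw [integral_pow_mul_exp_neg_mul_Ioi m hb]; positivity)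

theorem integral_pow_mul_exp_neg_mul_mul_sum_mul_sum (a : ℕ) {b : ℝ} (hb : 0 < b)
    (s t : Finset ℕ) (u v : ℕ → ℝ) :
    ∫ x in Ioi (0 : ℝ), x ^ a * exp (-b * x) * (∑ i ∈ s, u i * x ^ i) * (∑ l ∈ t, v l * x ^ l)
      = ∑ i ∈ s, ∑ l ∈ t, u i * v l * ((a + i + l)! / b ^ (a + i + l + 1)) := by
  have expand : ∀ x : ℝ, x ^ a * exp (-b * x) * (∑ i ∈ s, u i * x ^ i) * (∑ l ∈ t, v l * x ^ l)
      = ∑ i ∈ s, ∑ l ∈ t, u i * v l * (x ^ (a + i + l) * exp (-b * x)) := fun x => by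
    rw [mul_assoc, sum_mul_sum, mul_sum]
    refine sum_congr rfl fun i _ => ?_
    rw [mul_sum]
    refine sum_congr rfl fun l _ => ?_
    ring
  have hint : ∀ i l, Integrable (fun x => u i * v l * (x ^ (a + i + l) * exp (-b * x)))
      (volume.restrict (Ioi 0)) :=
    fun i l => (integrableOn_pow_mul_exp_neg_mul_Ioi _ hb).const_mul _
  simp_rw [expand]
  rw [integral_finsetSum _ fun i _ => integrable_finsetSum _ fun l _ => hint i l]
  refine sum_congr rfl fun i _ => ?_
  rw [integral_finsetSum _ fun l _ => hint i l]
  refine sum_congr rfl fun l _ => ?_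
  rw [integral_const_mul, integral_pow_mul_exp_neg_mul_Ioi _ hb]

theorem genBinom_natCast (m q : ℕ) : genBinom m q = m.choose q := by
  rw [genBinom, ← descPochhammer_eval_eq_prod_range, Nat.cast_choose_eq_descPochhammer_div]

theorem lag_natCast (j a : ℕ) (x : ℝ) :
    lag j a x = ∑ i ∈ range (j + 1), (-1) ^ i * (a + j).choose (a + i) / i ! * x ^ i := by
  refine sum_congr rfl fun i hi => ?_
  rw [← Nat.cast_add, genBinom_natCast,
    Nat.choose_symm_of_eq_add (show j + a = (j - i) + (a + i) by simp at hi; omega),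
    add_comm j a]
  ring

theorem sum_sum_choose_mul_choose_mul_factorial_div_two_pow (a j k : ℕ) :
    ∑ i ∈ range (j + 1), ∑ l ∈ range (k + 1),
      (-1) ^ i * (a + j).choose (a + i) / i ! * ((-1) ^ l * (a + k).choose (a + l) / l !)
        * ((a + i + l)! / 2 ^ (a + i + l + 1) : ℝ)
      = (a + j + k)! / (j ! * k ! * 2 ^ (a + j + k + 1)) := by
  have termwise : ∀ i ∈ range (j + 1), ∀ l ∈ range (k + 1),
      (-1) ^ i * (a + j).choose (a + i) / i ! * ((-1) ^ l * (a + k).choose (a + l) / l !)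
        * ((a + i + l)! / 2 ^ (a + i + l + 1) : ℝ)
      = a ! / 2 ^ (a + j + k + 1) * (((-1 : ℤ) ^ i * (a + j).choose (a + i) * 2 ^ (j - i)
        * ((-1) ^ l * (a + k).choose (a + l) * 2 ^ (k - l)) * trinomial a i l : ℤ) : ℝ) := by
    intro i hi l hl
    simp only [Finset.mem_range] at hi hl
    rw [← trinomial_mul_factorial,
      show a + j + k + 1 = (j - i) + (k - l) + (a + i + l + 1) by omega]
    push_cast
    field_simp
    ring
  rw [sum_congr rfl fun i hi => sum_congr rfl fun l hl => termwise i hi l hl]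
  simp_rw [← mul_sum, ← Int.cast_sum, sum_sum_neg_one_pow_mul_trinomial, Int.cast_natCast,
    ← trinomial_mul_factorial a j k]
  push_cast
  field_simp

theorem laguerre_product_integral_b_two (n : ℕ) (hn : 1 ≤ n) (j k : ℕ) :
    ∫ x in Set.Ioi (0 : ℝ),
        x ^ ((n : ℝ) - 1) * Real.exp (-2 * x) * lag j ((n : ℝ) - 1) x * lag k ((n : ℝ) - 1) x
      = Real.Gamma ((j : ℝ) + k + n) /
          ((Nat.factorial j) * (Nat.factorial k) * 2 ^ (j + k + n)) := by
  obtain ⟨a, rfl⟩ : ∃ a, n = a + 1 := ⟨n - 1, by omega⟩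
  have hα : ((a + 1 : ℕ) : ℝ) - 1 = a := by push_cast; ring
  have hΓ : Gamma ((j : ℝ) + k + (a + 1 : ℕ)) = (a + j + k)! := by
    rw [← Gamma_nat_eq_factorial]
    push_cast
    ring_nf
  simp_rw [hα, rpow_natCast, lag_natCast]
  rw [integral_pow_mul_exp_neg_mul_mul_sum_mul_sum a two_pos,
    sum_sum_choose_mul_choose_mul_factorial_div_two_pow, hΓ,
    show j + k + (a + 1) = a + j + k + 1 by ring]
end

section
/- For Re(β) > -1, Re(s) > 0, α > -1 and nonnegative integer j, ∫_0^∞ e^{-sx} x^β L_j^{(α)}(x) dx = Γ(β+1) Γ(α+j+1) / (j! Γ(α+1)) · s^{-(β+1)} · ₂F₁(-j, β+1; α+1; 1/s). -/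
open scoped BigOperators
open MeasureTheory

noncomputable def pochC (a : ℂ) (i : ℕ) : ℂ := ∏ t ∈ Finset.range i, (a + t)

/-- Terminating Gauss hypergeometric sum `₂F₁(-j, b; c; x)` over ℂ. -/
noncomputable def hyp2F1C (j : ℕ) (b c x : ℂ) : ℂ :=
  ∑ i ∈ Finset.range (j + 1),
    pochC (-(j : ℂ)) i * pochC b i / (pochC c i * (Nat.factorial i)) * x ^ i

/-! Expanding `L_j^{(α)}` in powers of `x`, the transform is a finite sum of the moments
`∫₀^∞ x^a e^{-sx} dx = Γ(a+1) s^{-(a+1)}`. For real `s > 0` this is the Euler integral; both sides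
are holomorphic in `s` on `Re s > 0`, so the identity extends there. Writing
`Γ(β+i+1) = Γ(β+1) (β+1)_i`, `Γ(α+j+1) = Γ(α+1) (α+1)_j` and `(-j)_i = (-1)^i j!/(j-i)!`
turns the `i`-th moment term into the `i`-th term of `₂F₁(-j, β+1; α+1; 1/s)`. -/

open Set Complex Filter Topology

lemma norm_cpow_mul_cexp_neg_mul {t : ℝ} (ht : 0 < t) (a s : ℂ) :
    ‖(t : ℂ) ^ a * cexp (-s * t)‖ = t ^ a.re * Real.exp (-s.re * t) := by
  rw [norm_mul, norm_cpow_eq_rpow_re_of_pos ht, norm_exp]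
  simp

lemma integrableOn_rpow_mul_exp_neg_mul {r b : ℝ} (hr : -1 < r) (hb : 0 < b) :
    IntegrableOn (fun t : ℝ ↦ t ^ r * Real.exp (-b * t)) (Ioi 0) := by
  simpa using integrableOn_rpow_mul_exp_neg_mul_rpow hr zero_lt_one hb

lemma aestronglyMeasurable_cpow_mul_cexp_neg_mul (a s : ℂ) (μ : Measure ℝ) :
    AEStronglyMeasurable (fun t : ℝ ↦ (t : ℂ) ^ a * cexp (-s * t)) μ := by
  fun_prop

lemma integrableOn_cpow_mul_cexp_neg_mul {a s : ℂ} (ha : -1 < a.re) (hs : 0 < s.re) :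
    IntegrableOn (fun t : ℝ ↦ (t : ℂ) ^ a * cexp (-s * t)) (Ioi 0) := by
  refine (integrableOn_rpow_mul_exp_neg_mul ha hs).mono'
    (aestronglyMeasurable_cpow_mul_cexp_neg_mul a s _) ?_
  filter_upwards [ae_restrict_mem measurableSet_Ioi] with t ht
  exact (norm_cpow_mul_cexp_neg_mul ht a s).le

lemma integral_cpow_mul_cexp_neg_ofReal_mul {a : ℂ} (ha : -1 < a.re) {r : ℝ} (hr : 0 < r) :
    ∫ t in Ioi (0 : ℝ), (t : ℂ) ^ a * cexp (-r * t) = Gamma (a + 1) * (r : ℂ) ^ (-(a + 1)) := by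
  have ha' : 0 < (a + 1).re := by rw [add_re, one_re]; linarith
  have harg : (r : ℂ).arg ≠ Real.pi := by
    rw [arg_ofReal_of_nonneg hr.le]; exact Real.pi_ne_zero.symm
  have h := integral_cpow_mul_exp_neg_mul_Ioi ha' hr
  rw [add_sub_cancel_right] at h
  simp_rw [neg_mul]
  rw [h, cpow_neg, one_div, inv_cpow _ _ harg, mul_comm]

lemma differentiableOn_integral_cpow_mul_cexp_neg_mul {a : ℂ} (ha : -1 < a.re) :
    DifferentiableOn ℂ (fun s : ℂ ↦ ∫ t in Ioi (0 : ℝ), (t : ℂ) ^ a * cexp (-s * t))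
      {s | 0 < s.re} := by
  intro s₀ (hs₀ : 0 < s₀.re)
  have hε : 0 < s₀.re / 2 := by positivity
  have hre : ∀ s ∈ Metric.ball s₀ (s₀.re / 2), s₀.re / 2 < s.re := fun s hs ↦ by
    have := (abs_re_le_norm (s - s₀)).trans_lt (mem_ball_iff_norm.mp hs)
    rw [sub_re] at this
    linarith [neg_abs_le (s.re - s₀.re)]
  have hderiv : ∀ t : ℝ, t ≠ 0 → ∀ s : ℂ, HasDerivAt (fun s ↦ (t : ℂ) ^ a * cexp (-s * t))
      (-((t : ℂ) ^ (a + 1) * cexp (-s * t))) s := fun t ht s ↦ by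
    rw [cpow_add _ _ (ofReal_ne_zero.mpr ht), cpow_one]
    exact (((hasDerivAt_neg s).mul_const (t : ℂ)).cexp.const_mul _).congr_deriv (by ring)
  refine (hasDerivAt_integral_of_dominated_loc_of_deriv_le
    (F' := fun s t ↦ -((t : ℂ) ^ (a + 1) * cexp (-s * t)))
    (bound := fun t : ℝ ↦ t ^ (a.re + 1) * Real.exp (-(s₀.re / 2) * t))
    (Metric.ball_mem_nhds s₀ hε)
    (.of_forall fun s ↦ aestronglyMeasurable_cpow_mul_cexp_neg_mul a s _)
    (integrableOn_cpow_mul_cexp_neg_mul ha hs₀)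
    (aestronglyMeasurable_cpow_mul_cexp_neg_mul (a + 1) s₀ _).neg ?_
    (integrableOn_rpow_mul_exp_neg_mul (by linarith) hε)
    ?_).2.differentiableAt.differentiableWithinAt
  · filter_upwards [ae_restrict_mem measurableSet_Ioi] with t (ht : 0 < t) s hs
    rw [norm_neg, norm_cpow_mul_cexp_neg_mul ht, add_re, one_re]
    gcongr
    nlinarith [hre s hs]
  · filter_upwards [ae_restrict_mem measurableSet_Ioi] with t (ht : 0 < t) s _
    exact hderiv t ht.ne' s

lemma integral_cpow_mul_cexp_neg_mul {a s : ℂ} (ha : -1 < a.re) (hs : 0 < s.re) :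
    ∫ t in Ioi (0 : ℝ), (t : ℂ) ^ a * cexp (-s * t) = Gamma (a + 1) * s ^ (-(a + 1)) := by
  have hU : IsOpen {s : ℂ | 0 < s.re} := isOpen_lt continuous_const continuous_re
  have hg : DifferentiableOn ℂ (fun s : ℂ ↦ Gamma (a + 1) * s ^ (-(a + 1))) {s | 0 < s.re} :=
    fun s (hs : 0 < s.re) ↦
      ((differentiableAt_id.cpow_const (Or.inl hs)).const_mul _).differentiableWithinAt
  have hreal : Tendsto ((↑) : ℝ → ℂ) (𝓝[>] 1) (𝓝[≠] 1) :=
    tendsto_nhdsWithin_iff.mpr ⟨(continuous_ofReal.tendsto' 1 1 ofReal_one).mono_left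
      nhdsWithin_le_nhds, eventually_nhdsWithin_of_forall fun r (hr : 1 < r) ↦ by
        simpa using hr.ne'⟩
  refine ((differentiableOn_integral_cpow_mul_cexp_neg_mul ha).analyticOnNhd hU)
    |>.eqOn_of_preconnected_of_frequently_eq (hg.analyticOnNhd hU)
      (convex_halfSpace_re_gt 0).isPreconnected (by simp : (1 : ℂ) ∈ {s : ℂ | 0 < s.re})
      (hreal.frequently (Eventually.frequently ?_)) hs
  exact eventually_nhdsWithin_of_forall fun r (hr : 1 < r) ↦
    integral_cpow_mul_cexp_neg_ofReal_mul ha (zero_lt_one.trans hr)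

lemma integral_cexp_neg_mul_cpow_mul_sum {β s : ℂ} (hβ : -1 < β.re) (hs : 0 < s.re)
    (I : Finset ℕ) (c : ℕ → ℂ) :
    ∫ x in Ioi (0 : ℝ), cexp (-s * x) * (x : ℂ) ^ β * ∑ i ∈ I, c i * (x : ℂ) ^ i
      = ∑ i ∈ I, c i * (Gamma (β + i + 1) * s ^ (-(β + i + 1))) := by
  have hre : ∀ i : ℕ, -1 < (β + i).re := fun i ↦ by
    simp only [add_re, natCast_re]; linarith [(Nat.cast_nonneg i : (0 : ℝ) ≤ i)]
  calc _ = ∫ x in Ioi (0 : ℝ), ∑ i ∈ I, c i * ((x : ℂ) ^ (β + i) * cexp (-s * x)) :=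
        setIntegral_congr_fun measurableSet_Ioi fun x (hx : 0 < x) ↦ by
          rw [Finset.mul_sum]
          refine Finset.sum_congr rfl fun i _ ↦ ?_
          rw [cpow_add _ _ (ofReal_ne_zero.mpr hx.ne'), cpow_natCast]
          ring
    _ = ∑ i ∈ I, ∫ x in Ioi (0 : ℝ), c i * ((x : ℂ) ^ (β + i) * cexp (-s * x)) :=
        integral_finsetSum _ fun i _ ↦ (integrableOn_cpow_mul_cexp_neg_mul (hre i) hs).const_mul _
    _ = _ := Finset.sum_congr rfl fun i _ ↦ by
        rw [integral_const_mul, integral_cpow_mul_cexp_neg_mul (hre i) hs]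

lemma ne_neg_natCast_of_re_pos {z : ℂ} (hz : 0 < z.re) (k : ℕ) : z ≠ -k := by
  rintro rfl
  simp only [neg_re, natCast_re, Left.neg_pos_iff] at hz
  exact (Nat.cast_nonneg k).not_gt hz

lemma pochC_eq_ascPochhammer_eval (a : ℂ) (n : ℕ) : pochC a n = (ascPochhammer ℂ n).eval a := by
  induction n with
  | zero => simp [pochC]
  | succ n ih => rw [pochC, Finset.prod_range_succ, ← pochC, ih, ascPochhammer_succ_eval]

lemma pochC_add (a : ℂ) (m n : ℕ) : pochC a (m + n) = pochC a m * pochC (a + m) n := by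
  simp only [pochC, Finset.prod_range_add, Nat.cast_add, add_assoc]

lemma pochC_neg_natCast (n i : ℕ) : pochC (-(n : ℂ)) i = (-1) ^ i * n.descFactorial i := by
  rw [pochC_eq_ascPochhammer_eval, ascPochhammer_eval_neg_eq_descPochhammer,
    descPochhammer_eval_eq_descFactorial]

lemma pochC_ne_zero {a : ℂ} (ha : ∀ k : ℕ, a ≠ -k) (n : ℕ) : pochC a n ≠ 0 := by
  rw [pochC_eq_ascPochhammer_eval, Ne, ascPochhammer_eval_eq_zero_iff]
  rintro ⟨k, -, hk⟩
  exact ha k (neg_eq_iff_eq_neg.mp hk.symm)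

lemma Gamma_add_nat_eq_mul_pochC {z : ℂ} (hz : ∀ k : ℕ, z ≠ -k) (n : ℕ) :
    Gamma (z + n) = Gamma z * pochC z n := by
  rw [pochC_eq_ascPochhammer_eval, ← Gamma_add_nat_div_Gamma_eq z hz,
    mul_div_cancel₀ _ (Gamma_ne_zero hz)]

lemma genBinom_natCast_add_eq_pochC (α : ℝ) (n m : ℕ) :
    (genBinom (((n + m : ℕ) : ℝ) + α) m : ℂ) = pochC ((α : ℂ) + 1 + n) m / m.factorial := by
  rw [genBinom, pochC, ← Finset.prod_range_reflect]
  push_cast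
  congr 1
  refine Finset.prod_congr rfl fun t ht ↦ ?_
  rw [Finset.mem_range] at ht
  rw [Nat.sub_sub, Nat.cast_sub (by omega : 1 + t ≤ m)]
  push_cast
  ring

lemma Gamma_mul_cpow_neg_add_nat {b : ℂ} (hb : ∀ k : ℕ, b ≠ -k) {s : ℂ} (hs : s ≠ 0) (i : ℕ) :
    Gamma (b + i) * s ^ (-(b + i)) = Gamma b * s ^ (-b) * (pochC b i * (1 / s) ^ i) := by
  rw [Gamma_add_nat_eq_mul_pochC hb, neg_add, cpow_add _ _ hs, cpow_neg s i, cpow_natCast,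
    one_div, inv_pow]
  ring

lemma laguerre_coeff_eq {α : ℝ} (hα : ∀ k : ℕ, (α : ℂ) + 1 ≠ -k) (i m : ℕ) :
    (-1) ^ i * (genBinom (((i + m : ℕ) : ℝ) + α) m : ℂ) / i.factorial
      = Gamma ((α : ℂ) + (i + m : ℕ) + 1) / ((i + m).factorial * Gamma ((α : ℂ) + 1))
        * (pochC (-((i + m : ℕ) : ℂ)) i / (pochC ((α : ℂ) + 1) i * i.factorial)) := by
  have hfact : ((i + m).factorial : ℂ) = m.factorial * (i + m).descFactorial i := by
    rw [← Nat.factorial_mul_descFactorial (Nat.le_add_right i m), Nat.add_sub_cancel_left]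
    push_cast; ring
  have hdesc : ((i + m).descFactorial i : ℂ) ≠ 0 := by
    rw [Nat.cast_ne_zero, Ne, Nat.descFactorial_eq_zero_iff_lt]; omega
  rw [add_right_comm, Gamma_add_nat_eq_mul_pochC hα, pochC_add, pochC_neg_natCast,
    genBinom_natCast_add_eq_pochC, hfact]
  have := Gamma_ne_zero hα
  have := pochC_ne_zero hα i
  field_simp

theorem laguerre_laplace_transform (β s : ℂ) (hβ : -1 < β.re) (hs : 0 < s.re)
    (α : ℝ) (hα : -1 < α) (j : ℕ) :
    ∫ x in Set.Ioi (0 : ℝ), Complex.exp (-s * x) * (x : ℂ) ^ β * (lag j α x : ℂ)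
      = Complex.Gamma (β + 1) * Complex.Gamma ((α : ℂ) + j + 1) /
          ((Nat.factorial j) * Complex.Gamma ((α : ℂ) + 1))
          * s ^ (-(β + 1))
          * hyp2F1C j (β + 1) ((α : ℂ) + 1) (1 / s) := by
  have hs₀ : s ≠ 0 := by rintro rfl; simp at hs
  have hβ₁ := ne_neg_natCast_of_re_pos (z := β + 1) (by rw [add_re, one_re]; linarith)
  have hα₁ := ne_neg_natCast_of_re_pos (z := (α : ℂ) + 1)
    (by rw [add_re, ofReal_re, one_re]; linarith)
  have hlag : ∀ x : ℝ, (lag j α x : ℂ) = ∑ i ∈ Finset.range (j + 1),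
      (-1) ^ i * (genBinom (j + α) (j - i) : ℂ) / i.factorial * (x : ℂ) ^ i := fun x ↦ by
    simp only [lag]
    push_cast
    refine Finset.sum_congr rfl fun i _ ↦ ?_
    ring
  simp_rw [hlag, integral_cexp_neg_mul_cpow_mul_sum hβ hs, hyp2F1C, Finset.mul_sum]
  refine Finset.sum_congr rfl fun i hi ↦ ?_
  obtain ⟨m, rfl⟩ := Nat.exists_eq_add_of_le (Nat.lt_succ_iff.mp (Finset.mem_range.mp hi))
  rw [Nat.add_sub_cancel_left, laguerre_coeff_eq hα₁, add_right_comm β,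
    Gamma_mul_cpow_neg_add_nat hβ₁ hs₀]
  ring
end

section
/- For integers n ≥ 1, l ≥ 0, s = 2 and k ≥ 0, ∫_0^∞ x^{n+l-1} e^{-2x} L_k^{(n-1)}(x) dx = Γ(n+l) Γ(n+k) / (k! Γ(n)) · 2^{-(n+l)} · ₂F₁(-k, n+l; n; 1/2). -/
open scoped BigOperators
open MeasureTheory Real

noncomputable def poch (a : ℝ) (i : ℕ) : ℝ := ∏ t ∈ Finset.range i, (a + t)

/-- Terminating Gauss hypergeometric sum `₂F₁(-k, b; c; x)`. -/
noncomputable def hyp2F1 (k : ℕ) (b c x : ℝ) : ℝ :=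
  ∑ i ∈ Finset.range (k + 1),
    poch (-(k : ℝ)) i * poch b i / (poch c i * (Nat.factorial i)) * x ^ i

/-!
Expanding `L_k^{(n-1)}` termwise, the `i`-th monomial integrates to
`∫ x^{n+l+i-1} e^{-2x} dx = Γ(n+l+i) 2^{-(n+l+i)}`, and `Γ(n+l+i) = (n+l)_i Γ(n+l)`.
Matching coefficients with the hypergeometric sum reduces to the Laguerre coefficient identity
`(-1)^i C(k+n-1, k-i) / i! = (n)_k / k! · (-k)_i / ((n)_i i!)`, which follows from
`(n)_k = (n)_i (n+i)_{k-i}` and `(-k)_i = (-1)^i k! / (k-i)!`.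
-/

open Finset Polynomial Nat

lemma poch_eq_ascPochhammer_eval (a : ℝ) (i : ℕ) : poch a i = (ascPochhammer ℝ i).eval a := by
  induction i with
  | zero => simp [poch]
  | succ i ih => rw [poch, prod_range_succ, ← poch, ih, ascPochhammer_succ_eval]

lemma poch_pos {a : ℝ} (ha : 0 < a) (i : ℕ) : 0 < poch a i :=
  prod_pos fun _ _ => by positivity

lemma poch_add (a : ℝ) (i j : ℕ) : poch a (i + j) = poch a i * poch (a + i) j := by
  simp only [poch, prod_range_add, cast_add, add_assoc]

lemma poch_neg_natCast (k i : ℕ) : poch (-k) i = (-1) ^ i * k.descFactorial i := by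
  rw [poch_eq_ascPochhammer_eval, ascPochhammer_eval_neg_eq_descPochhammer,
    descPochhammer_eval_eq_descFactorial]

lemma genBinom_eq_poch_div (a : ℝ) (m : ℕ) : genBinom a m = poch (a - m + 1) m / m ! := by
  rw [genBinom, ← descPochhammer_eval_eq_prod_range, descPochhammer_eval_eq_ascPochhammer,
    poch_eq_ascPochhammer_eval]

lemma Real.Gamma_add_natCast_eq_poch_mul {x : ℝ} (hx : ∀ j : ℕ, x + j ≠ 0) (m : ℕ) :
    Gamma (x + m) = poch x m * Gamma x := by
  induction m with
  | zero => simp [poch]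
  | succ m ih =>
    rw [cast_succ, ← add_assoc, Gamma_add_one (hx m), ih]
    simp only [poch, prod_range_succ]
    ring

/-- Coefficientwise form of `L_k^{(a-1)}(x) = (a)_k / k! · ₁F₁(-k; a; x)`. -/
lemma neg_one_pow_mul_genBinom_div_factorial {a : ℝ} (ha : 0 < a) {k i : ℕ} (hik : i ≤ k) :
    (-1) ^ i * genBinom (k + (a - 1)) (k - i) / i !
      = poch a k / k ! * (poch (-k) i / (poch a i * i !)) := by
  have hbinom : genBinom (k + (a - 1)) (k - i) = poch (a + i) (k - i) / (k - i) ! := by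
    rw [genBinom_eq_poch_div, cast_sub hik]
    ring_nf
  have hfact : ((k - i) ! : ℝ) * k.descFactorial i = k ! := by
    exact_mod_cast factorial_mul_descFactorial hik
  have hdesc : (k.descFactorial i : ℝ) ≠ 0 :=
    cast_ne_zero.mpr (descFactorial_eq_zero_iff_lt.not.mpr hik.not_gt)
  have hpoch : poch a i ≠ 0 := (poch_pos ha i).ne'
  have hsplit : poch a k = poch a i * poch (a + i) (k - i) := by
    rw [← poch_add, Nat.add_sub_cancel' hik]
  rw [hbinom, poch_neg_natCast, ← hfact, hsplit]
  field_simp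

lemma rpow_mul_exp_mul_lag_eq_sum {s c x : ℝ} (hx : 0 < x) (k : ℕ) (α : ℝ) :
    x ^ (s - 1) * exp (-c * x) * lag k α x
      = ∑ i ∈ range (k + 1), (-1) ^ i * genBinom (k + α) (k - i) / i !
          * (x ^ (s + i - 1) * exp (-(c * x))) := by
  rw [lag, mul_sum]
  refine sum_congr rfl fun i _ => ?_
  rw [add_sub_right_comm, rpow_add hx, rpow_natCast, neg_mul]
  ring

theorem integral_rpow_mul_exp_mul_lag {s c : ℝ} (hs : 0 < s) (hc : 0 < c) (k : ℕ) (α : ℝ) :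
    ∫ x in Set.Ioi 0, x ^ (s - 1) * exp (-c * x) * lag k α x
      = ∑ i ∈ range (k + 1), (-1) ^ i * genBinom (k + α) (k - i) / i !
          * ((1 / c) ^ (s + i) * Gamma (s + i)) := by
  have hint (i : ℕ) :
      IntegrableOn (fun x : ℝ => x ^ (s + i - 1) * exp (-(c * x))) (Set.Ioi 0) := by
    simpa [neg_mul] using integrableOn_rpow_mul_exp_neg_mul_rpow
      (show -1 < s + i - 1 by linarith [i.cast_nonneg (α := ℝ)]) one_pos hc
  rw [setIntegral_congr_fun measurableSet_Ioi fun x hx => rpow_mul_exp_mul_lag_eq_sum hx k α,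
    integral_finsetSum _ fun i _ => (hint i).const_mul _]
  refine sum_congr rfl fun i _ => ?_
  rw [integral_const_mul, integral_rpow_mul_exp_neg_mul_Ioi (by positivity) hc]

theorem laguerre_monomial_integral (n : ℕ) (hn : 1 ≤ n) (l k : ℕ) :
    ∫ x in Set.Ioi (0 : ℝ),
        x ^ ((n : ℝ) + l - 1) * Real.exp (-2 * x) * lag k ((n : ℝ) - 1) x
      = Real.Gamma ((n : ℝ) + l) * Real.Gamma ((n : ℝ) + k) /
          ((Nat.factorial k) * Real.Gamma n) * 2 ^ (-((n : ℝ) + l))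
          * hyp2F1 k ((n : ℝ) + l) (n : ℝ) (1 / 2) := by
  have hn0 : (0 : ℝ) < n := cast_pos.mpr hn
  have hnl : (0 : ℝ) < n + l := by positivity
  rw [integral_rpow_mul_exp_mul_lag hnl two_pos, hyp2F1, mul_sum]
  refine sum_congr rfl fun i hi => ?_
  rw [neg_one_pow_mul_genBinom_div_factorial hn0 (Nat.lt_succ_iff.mp (mem_range.mp hi)),
    Gamma_add_natCast_eq_poch_mul (fun j => by positivity) i,
    Gamma_add_natCast_eq_poch_mul (fun j => by positivity) k, rpow_add (by norm_num),
    rpow_natCast, one_div 2, inv_rpow zero_le_two, ← rpow_neg zero_le_two]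
  field_simp
end

section
/- For a nonnegative integer m and integer n ≥ 1, the square of the Laguerre polynomial L_m^{(n-1)}(x) equals Σ_{l=0}^{2m} σ_l · x^l / l!, where σ_l = (-1)^l Σ_{i=0}^{l} binomial(l,i) · binomial(n+m-1, m-l+i) · binomial(n+m-1, m-i). -/
open scoped BigOperators

/-- `Nat.choose` with an integer lower index, zero when the index is negative. -/
def chooseZ (a : ℕ) (k : ℤ) : ℕ :=
  if k < 0 then 0 else a.choose k.toNat

/-- The coefficients `σ_l^{n,m}`. -/
noncomputable def sigma' (n m l : ℕ) : ℝ :=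
  (-1 : ℝ) ^ l *
    ∑ i ∈ Finset.range (l + 1),
      (Nat.choose l i) * (chooseZ (n + m - 1) ((m : ℤ) - l + i)) * (chooseZ (n + m - 1) ((m : ℤ) - i))

/-!
For `α = n - 1` the generalized binomial coefficients in `L_m^{(α)}` have the natural upper index
`N = n + m - 1`, so `L_m^{(n-1)}(x) = ∑_{i ≤ m} (-1)^i C(N, m - i) x^i / i!`. Squaring is a Cauchy
product, and writing `1 / (i! (l - i)!) = C(l, i) / l!` turns the coefficient of `x^l` into `σ_l / l!`.
-/

open Finset Polynomial

theorem genBinom_natCast_s8 (N k : ℕ) : genBinom N k = N.choose k := by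
  rw [genBinom, ← descPochhammer_eval_eq_prod_range, descPochhammer_eval_eq_descFactorial,
    Nat.descFactorial_eq_factorial_mul_choose, Nat.cast_mul]
  field_simp

theorem chooseZ_of_neg {a : ℕ} {k : ℤ} (hk : k < 0) : chooseZ a k = 0 := if_pos hk

theorem chooseZ_natCast_sub {a m i : ℕ} (hi : i ≤ m) : chooseZ a ((m : ℤ) - i) = a.choose (m - i) := by
  rw [chooseZ, if_neg (by omega)]
  congr
  omega

/-- The coefficient of `x ^ i` in `L_m^{(α)}(x)`, where `N = m + α`. -/
noncomputable def lagCoeff (N m i : ℕ) : ℝ :=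
  (-1) ^ i * chooseZ N ((m : ℤ) - i) / i.factorial

theorem lagCoeff_eq_zero {N m i : ℕ} (hi : m < i) : lagCoeff N m i = 0 := by
  rw [lagCoeff, chooseZ_of_neg (by omega)]
  simp

theorem lag_natCast_sub_one_eq_sum {n : ℕ} (hn : 1 ≤ n) (m : ℕ) (x : ℝ) :
    lag m ((n : ℝ) - 1) x = ∑ i ∈ range (m + 1), lagCoeff (n + m - 1) m i * x ^ i := by
  have hN : (m : ℝ) + ((n : ℝ) - 1) = ((n + m - 1 : ℕ) : ℝ) := by
    rw [Nat.cast_sub (by omega)]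
    push_cast
    ring
  refine sum_congr rfl fun i hi => ?_
  rw [hN, genBinom_natCast_s8, lagCoeff, chooseZ_natCast_sub (mem_range_succ_iff.1 hi)]
  ring

theorem sum_range_mul_sum_range_eq_sum_antidiagonal {R : Type*} [CommSemiring R] (a b : ℕ → R)
    {m : ℕ} (ha : ∀ i, m < i → a i = 0) (hb : ∀ i, m < i → b i = 0) (x : R) :
    (∑ i ∈ range (m + 1), a i * x ^ i) * ∑ i ∈ range (m + 1), b i * x ^ i
      = ∑ l ∈ range (2 * m + 1), (∑ ij ∈ antidiagonal l, a ij.1 * b ij.2) * x ^ l := by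
  have coeff_eq {c : ℕ → R} (hc : ∀ i, m < i → c i = 0) (k : ℕ) :
      (∑ i ∈ range (m + 1), C (c i) * X ^ i).coeff k = c k := by
    simp only [finsetSum_coeff, coeff_C_mul_X_pow, sum_ite_eq, mem_range]
    split_ifs with hk
    · rfl
    · exact (hc k (by omega)).symm
  have natDegree_le {c : ℕ → R} (hc : ∀ i, m < i → c i = 0) :
      (∑ i ∈ range (m + 1), C (c i) * X ^ i).natDegree ≤ m :=
    natDegree_le_iff_coeff_eq_zero.2 fun k hk => (coeff_eq hc k).trans (hc k hk)
  have hpq : ((∑ i ∈ range (m + 1), C (a i) * X ^ i) *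
      ∑ i ∈ range (m + 1), C (b i) * X ^ i).natDegree < 2 * m + 1 :=
    natDegree_mul_le.trans_lt (by linarith [natDegree_le ha, natDegree_le hb])
  have eval_eq (c : ℕ → R) : (∑ i ∈ range (m + 1), C (c i) * X ^ i).eval x
      = ∑ i ∈ range (m + 1), c i * x ^ i := by
    simp [eval_finsetSum]
  rw [← eval_eq, ← eval_eq, ← eval_mul, eval_eq_sum_range' hpq]
  simp only [coeff_mul, coeff_eq ha, coeff_eq hb]

theorem sum_lagCoeff_mul_lagCoeff (n m l : ℕ) :
    ∑ i ∈ range (l + 1), lagCoeff (n + m - 1) m i * lagCoeff (n + m - 1) m (l - i)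
      = sigma' n m l / l.factorial := by
  rw [sigma', Nat.cast_sum, mul_sum, sum_div]
  refine sum_congr rfl fun i hi => ?_
  have hil : i ≤ l := mem_range_succ_iff.1 hi
  have hsign : (-1 : ℝ) ^ i * (-1) ^ (l - i) = (-1) ^ l := by
    rw [← pow_add, Nat.add_sub_cancel' hil]
  have hidx : (m : ℤ) - (l - i : ℕ) = m - l + i := by omega
  rw [lagCoeff, lagCoeff, Nat.cast_mul, Nat.cast_mul, Nat.cast_choose ℝ hil, hidx, ← hsign]
  field_simp

theorem laguerre_square_monomial_expansion (n : ℕ) (hn : 1 ≤ n) (m : ℕ) (x : ℝ) :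
    (lag m ((n : ℝ) - 1) x) ^ 2
      = ∑ l ∈ Finset.range (2 * m + 1), sigma' n m l * x ^ l / (Nat.factorial l) := by
  rw [lag_natCast_sub_one_eq_sum hn, sq, sum_range_mul_sum_range_eq_sum_antidiagonal _ _
    (fun _ => lagCoeff_eq_zero) (fun _ => lagCoeff_eq_zero)]
  refine sum_congr rfl fun l _ => ?_
  rw [Nat.sum_antidiagonal_eq_sum_range_succ_mk, sum_lagCoeff_mul_lagCoeff]
  ring
end
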